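/- Suppose the data matrices satisfy X+ = A_s X- + B_s U- + W- for some (A_s, B_s) and some W- with [I; W-^T]^T Φ [I; W-^T] ≥ 0, where Φ ∈ S^{n+T} has Φ22 ≤ 0 and ker Φ22 ⊆ ker Φ12. Define N as in the data QMI: N = [[I, X+],[0, -X-],[0, -U-]] Φ [·]^T. Then [I; A_s^T; B_s^T]^T N [I; A_s^T; B_s^T] ≥ 0; consequently the generalized Schur complement N|N22 is positive semidefinite. -/

import Mathlib

open Matrix

open Classical in
/-- Moore-Penrose pseudoinverse (defined by choice from the four Penrose conditions). -/
noncomputable def pinv {k : Type*} [Fintype k] [DecidableEq k] (A : Matrix k k ℝ) : Matrix k k ℝ :=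
  if h : ∃ B : Matrix k k ℝ, A * B * A = A ∧ B * A * B = B ∧ (A * B)ᵀ = A * B ∧ (B * A)ᵀ = B * A
  then h.choose else 0

lemma mp_exists {k : Type*} [Fintype k] [DecidableEq k] {A : Matrix k k ℝ} (hA : Aᵀ = A) :
    ∃ B : Matrix k k ℝ, A * B * A = A ∧ B * A * B = B ∧ (A * B)ᵀ = A * B ∧ (B * A)ᵀ = B * A := by
  have hA' : A.IsHermitian := hA
  set U : Matrix k k ℝ := (hA'.eigenvectorUnitary : Matrix k k ℝ) with hUdef
  set lam : k → ℝ := hA'.eigenvalues with hlam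
  have hU2 : star U * U = 1 := (Matrix.mem_unitaryGroup_iff').mp (hA'.eigenvectorUnitary).2
  have hspec : A = U * diagonal lam * star U := by
    have h0 := hA'.spectral_theorem
    have hd : (RCLike.ofReal ∘ hA'.eigenvalues : k → ℝ) = lam := by ext; simp [hlam]
    rwa [hd] at h0
  set g : k → ℝ := fun i => if lam i = 0 then 0 else (lam i)⁻¹ with hg
  have hmul : ∀ e f : k → ℝ, (U * diagonal e * star U) * (U * diagonal f * star U)
      = U * diagonal (fun i => e i * f i) * star U := by
    intro e f
    calc (U * diagonal e * star U) * (U * diagonal f * star U)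
        = U * diagonal e * (star U * U) * (diagonal f * star U) := by
          simp only [Matrix.mul_assoc]
    _ = U * (diagonal e * diagonal f) * star U := by
          rw [hU2, mul_one]; simp only [Matrix.mul_assoc]
    _ = U * diagonal (fun i => e i * f i) * star U := by rw [diagonal_mul_diagonal]
  have hsymm : ∀ e : k → ℝ, (U * diagonal e * star U)ᵀ = U * diagonal e * star U := by
    intro e
    have h1 : (star U : Matrix k k ℝ) = Uᵀ := rfl
    rw [transpose_mul, transpose_mul, h1, transpose_transpose, diagonal_transpose, ← mul_assoc]
  have hfun1 : (fun i => lam i * g i * lam i) = lam := by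
    funext i
    by_cases h : lam i = 0 <;> simp [hg, h]
  have hfun2 : (fun i => g i * lam i * g i) = g := by
    funext i
    by_cases h : lam i = 0 <;> simp [hg, h]
  refine ⟨U * diagonal g * star U, ?_, ?_, ?_, ?_⟩
  · rw [hspec]
    simp only [hmul]
    rw [hfun1]
  · rw [hspec]
    simp only [hmul]
    rw [hfun2]
  · rw [hspec, hmul]; exact hsymm _
  · rw [hspec, hmul]; exact hsymm _

lemma mp_unique {k : Type*} [Fintype k] [DecidableEq k] {A B C : Matrix k k ℝ}
    (hB : A * B * A = A ∧ B * A * B = B ∧ (A * B)ᵀ = A * B ∧ (B * A)ᵀ = B * A)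
    (hC : A * C * A = A ∧ C * A * C = C ∧ (A * C)ᵀ = A * C ∧ (C * A)ᵀ = C * A) :
    B = C := by
  obtain ⟨hB1, hB2, hB3, hB4⟩ := hB
  obtain ⟨hC1, hC2, hC3, hC4⟩ := hC
  have hAB : A * B = A * C := by
    calc A * B = (A * B)ᵀ := hB3.symm
    _ = Bᵀ * Aᵀ := transpose_mul _ _
    _ = Bᵀ * (A * C * A)ᵀ := by rw [hC1]
    _ = Bᵀ * (Aᵀ * (A * C)ᵀ) := by rw [transpose_mul (A * C) A]
    _ = (Bᵀ * Aᵀ) * (A * C)ᵀ := by rw [mul_assoc]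
    _ = (A * B)ᵀ * (A * C) := by rw [← transpose_mul, hC3]
    _ = (A * B) * (A * C) := by rw [hB3]
    _ = (A * B * A) * C := by simp only [Matrix.mul_assoc]
    _ = A * C := by rw [hB1]
  have hBA : B * A = C * A := by
    calc B * A = (B * A)ᵀ := hB4.symm
    _ = Aᵀ * Bᵀ := transpose_mul _ _
    _ = (A * (C * A))ᵀ * Bᵀ := by rw [← mul_assoc, hC1]
    _ = (C * A)ᵀ * Aᵀ * Bᵀ := by rw [transpose_mul A (C*A)]
    _ = (C * A)ᵀ * (B * A)ᵀ := by rw [mul_assoc, ← transpose_mul]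
    _ = (C * A) * (B * A) := by rw [hC4, hB4]
    _ = C * (A * B * A) := by simp only [Matrix.mul_assoc]
    _ = C * A := by rw [hB1]
  calc B = B * A * B := hB2.symm
  _ = C * A * B := by rw [hBA]
  _ = C * (A * B) := mul_assoc _ _ _
  _ = C * (A * C) := by rw [hAB]
  _ = C * A * C := (mul_assoc _ _ _).symm
  _ = C := hC2

lemma pinv_spec {k : Type*} [Fintype k] [DecidableEq k] {A : Matrix k k ℝ} (hA : Aᵀ = A) :
    A * pinv A * A = A ∧ pinv A * A * pinv A = pinv A ∧
    (A * pinv A)ᵀ = A * pinv A ∧ (pinv A * A)ᵀ = pinv A * A := by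
  have h := mp_exists hA
  rw [pinv, dif_pos h]
  exact h.choose_spec

lemma pinv_symm {k : Type*} [Fintype k] [DecidableEq k] {A : Matrix k k ℝ} (hA : Aᵀ = A) :
    (pinv A)ᵀ = pinv A := by
  obtain ⟨e1, e2, e3, e4⟩ := pinv_spec hA
  set B := pinv A with hB
  have t1 : A * Bᵀ = B * A := by
    calc A * Bᵀ = Aᵀ * Bᵀ := by rw [hA]
    _ = (B * A)ᵀ := (transpose_mul _ _).symm
    _ = B * A := e4
  have t2 : Bᵀ * A = A * B := by
    calc Bᵀ * A = Bᵀ * Aᵀ := by rw [hA]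
    _ = (A * B)ᵀ := (transpose_mul _ _).symm
    _ = A * B := e3
  have c1 : A * Bᵀ * A = A := by
    calc A * Bᵀ * A = Aᵀ * Bᵀ * Aᵀ := by rw [hA]
    _ = (A * B * A)ᵀ := by rw [transpose_mul (A*B) A, transpose_mul A B, ← mul_assoc]
    _ = Aᵀ := by rw [e1]
    _ = A := hA
  have c2 : Bᵀ * A * Bᵀ = Bᵀ := by
    calc Bᵀ * A * Bᵀ = Bᵀ * Aᵀ * Bᵀ := by rw [hA]
    _ = (B * A * B)ᵀ := by rw [transpose_mul (B*A) B, transpose_mul B A, ← mul_assoc]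
    _ = Bᵀ := by rw [e2]
  have c3 : (A * Bᵀ)ᵀ = A * Bᵀ := by rw [t1]; exact e4
  have c4 : (Bᵀ * A)ᵀ = Bᵀ * A := by rw [t2]; exact e3
  exact mp_unique ⟨c1, c2, c3, c4⟩ ⟨e1, e2, e3, e4⟩

lemma psd_cancel {k l : Type*} [Fintype k] [Fintype l] [DecidableEq k]
    {X : Matrix k k ℝ} (hX : X.PosSemidef) (Y : Matrix k l ℝ)
    (h : Yᵀ * X * Y = 0) : X * Y = 0 := by
  obtain ⟨B, hB⟩ : ∃ B : Matrix k k ℝ, X = star B * B := by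
    open scoped MatrixOrder in
    exact CStarAlgebra.nonneg_iff_eq_star_mul_self.mp hX.nonneg
  have key : (B * Y)ᴴ * (B * Y) = 0 := by
    rw [conjTranspose_mul, ← h, hB]
    simp only [Matrix.mul_assoc]
    rfl
  have hSY : B * Y = 0 := conjTranspose_mul_self_eq_zero.mp key
  rw [hB, Matrix.mul_assoc, hSY, Matrix.mul_zero]

theorem stmt_10 (n m T : ℕ)
    (Xp Xm : Matrix (Fin n) (Fin T) ℝ) (Um : Matrix (Fin m) (Fin T) ℝ)
    (As : Matrix (Fin n) (Fin n) ℝ) (Bs : Matrix (Fin n) (Fin m) ℝ)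
    (Wm : Matrix (Fin n) (Fin T) ℝ)
    (Φ11 : Matrix (Fin n) (Fin n) ℝ) (Φ12 : Matrix (Fin n) (Fin T) ℝ)
    (Φ22 : Matrix (Fin T) (Fin T) ℝ)
    (hΦ11 : Φ11ᵀ = Φ11) (hΦ22 : Φ22ᵀ = Φ22)
    (hΦneg : (-Φ22).PosSemidef)
    (hΦker : ∀ x : Fin T → ℝ, Φ22 *ᵥ x = 0 → Φ12 *ᵥ x = 0)
    (hdata : Xp = As * Xm + Bs * Um + Wm)
    (hnoise : ((fromRows (1 : Matrix (Fin n) (Fin n) ℝ) Wmᵀ)ᵀ *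
      fromBlocks Φ11 Φ12 Φ12ᵀ Φ22 *
      fromRows (1 : Matrix (Fin n) (Fin n) ℝ) Wmᵀ).PosSemidef) :
    ((fromRows (1 : Matrix (Fin n) (Fin n) ℝ) (fromRows Asᵀ Bsᵀ))ᵀ *
      (fromBlocks (1 : Matrix (Fin n) (Fin n) ℝ) Xp 0 (fromRows (-Xm) (-Um)) *
        fromBlocks Φ11 Φ12 Φ12ᵀ Φ22 *
        (fromBlocks (1 : Matrix (Fin n) (Fin n) ℝ) Xp 0 (fromRows (-Xm) (-Um)))ᵀ) *
      fromRows (1 : Matrix (Fin n) (Fin n) ℝ) (fromRows Asᵀ Bsᵀ)).PosSemidef ∧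
    ((fromBlocks (1 : Matrix (Fin n) (Fin n) ℝ) Xp 0 (fromRows (-Xm) (-Um)) *
        fromBlocks Φ11 Φ12 Φ12ᵀ Φ22 *
        (fromBlocks (1 : Matrix (Fin n) (Fin n) ℝ) Xp 0 (fromRows (-Xm) (-Um)))ᵀ).toBlocks₁₁ -
      (fromBlocks (1 : Matrix (Fin n) (Fin n) ℝ) Xp 0 (fromRows (-Xm) (-Um)) *
        fromBlocks Φ11 Φ12 Φ12ᵀ Φ22 *
        (fromBlocks (1 : Matrix (Fin n) (Fin n) ℝ) Xp 0 (fromRows (-Xm) (-Um)))ᵀ).toBlocks₁₂ *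
      pinv ((fromBlocks (1 : Matrix (Fin n) (Fin n) ℝ) Xp 0 (fromRows (-Xm) (-Um)) *
        fromBlocks Φ11 Φ12 Φ12ᵀ Φ22 *
        (fromBlocks (1 : Matrix (Fin n) (Fin n) ℝ) Xp 0 (fromRows (-Xm) (-Um)))ᵀ).toBlocks₂₂) *
      (fromBlocks (1 : Matrix (Fin n) (Fin n) ℝ) Xp 0 (fromRows (-Xm) (-Um)) *
        fromBlocks Φ11 Φ12 Φ12ᵀ Φ22 *
        (fromBlocks (1 : Matrix (Fin n) (Fin n) ℝ) Xp 0 (fromRows (-Xm) (-Um)))ᵀ).toBlocks₂₁).PosSemidef := by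
  set G : Matrix (Fin n ⊕ Fin m) (Fin T) ℝ := fromRows (-Xm) (-Um) with hGdef
  set F : Matrix (Fin n ⊕ Fin m) (Fin n) ℝ := fromRows Asᵀ Bsᵀ with hFdef
  set Φ : Matrix (Fin n ⊕ Fin T) (Fin n ⊕ Fin T) ℝ := fromBlocks Φ11 Φ12 Φ12ᵀ Φ22 with hΦdef
  set M : Matrix (Fin n ⊕ (Fin n ⊕ Fin m)) (Fin n ⊕ Fin T) ℝ := fromBlocks 1 Xp 0 G with hMdef
  set Z : Matrix (Fin n ⊕ (Fin n ⊕ Fin m)) (Fin n) ℝ :=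
    fromRows (1 : Matrix (Fin n) (Fin n) ℝ) F with hZdef
  have hMT : Mᵀ = fromBlocks 1 0 Xpᵀ Gᵀ := by
    rw [hMdef, fromBlocks_transpose, transpose_one, transpose_zero]
  have hMZ : Mᵀ * Z = fromRows 1 Wmᵀ := by
    have hG2 : Xpᵀ + Gᵀ * F = Wmᵀ := by
      rw [hGdef, hFdef, transpose_fromRows, fromCols_mul_fromRows, hdata]
      simp only [transpose_add, transpose_mul, transpose_neg, Matrix.neg_mul]
      abel
    rw [hMT, hZdef, fromBlocks_mul_fromRows]
    simp only [Matrix.one_mul, Matrix.zero_mul, add_zero, Matrix.mul_one]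
    rw [hG2]
  -- Part 1
  have part1 : (Zᵀ * (M * Φ * Mᵀ) * Z).PosSemidef := by
    have e : Zᵀ * (M * Φ * Mᵀ) * Z = (Mᵀ * Z)ᵀ * Φ * (Mᵀ * Z) := by
      rw [transpose_mul, transpose_transpose]
      simp only [Matrix.mul_assoc]
    rw [e, hMZ, hΦdef]
    exact hnoise
  -- Block decomposition of N
  set N11 : Matrix (Fin n) (Fin n) ℝ :=
    Φ11 + Xp * Φ12ᵀ + (Φ12 + Xp * Φ22) * Xpᵀ with hN11def
  set N12 : Matrix (Fin n) (Fin n ⊕ Fin m) ℝ := (Φ12 + Xp * Φ22) * Gᵀ with hN12def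
  set N21 : Matrix (Fin n ⊕ Fin m) (Fin n) ℝ := G * Φ12ᵀ + G * Φ22 * Xpᵀ with hN21def
  set N22 : Matrix (Fin n ⊕ Fin m) (Fin n ⊕ Fin m) ℝ := G * Φ22 * Gᵀ with hN22def
  have hN : M * Φ * Mᵀ = fromBlocks N11 N12 N21 N22 := by
    rw [hMT, hMdef, hΦdef, fromBlocks_multiply, fromBlocks_multiply]
    simp only [Matrix.one_mul, Matrix.mul_one, Matrix.zero_mul, Matrix.mul_zero,
      zero_add, add_zero, hN11def, hN12def, hN21def, hN22def]
  clear_value G F Φ M Z N11 N12 N21 N22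
  have hN22T : N22ᵀ = N22 := by
    rw [hN22def, transpose_mul, transpose_mul, transpose_transpose, hΦ22,
      ← Matrix.mul_assoc]
  have hnegN22 : (-N22).PosSemidef := by
    have h := hΦneg.mul_mul_conjTranspose_same G
    have e : G * -Φ22 * Gᴴ = -N22 := by
      rw [show (Gᴴ : Matrix (Fin T) (Fin n ⊕ Fin m) ℝ) = Gᵀ from rfl, hN22def,
        Matrix.mul_neg, Matrix.neg_mul]
    rwa [e] at h
  -- kernel inclusion, matrix form
  have hker : ∀ H : Matrix (Fin T) (Fin n ⊕ Fin m) ℝ, Φ22 * H = 0 → Φ12 * H = 0 := by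
    intro H h
    have h' : ∀ a b, (Φ22 * H) a b = 0 := fun a b => by rw [h]; rfl
    ext i j
    have hcol : Φ22 *ᵥ (fun t => H t j) = 0 := by
      ext i'
      simpa [Matrix.mulVec, dotProduct, Matrix.mul_apply] using h' i' j
    have := congrFun (hΦker _ hcol) i
    simpa [Matrix.mulVec, dotProduct, Matrix.mul_apply] using this
  obtain ⟨p1, p2, p3, p4⟩ := pinv_spec hN22T
  have hPT : (pinv N22)ᵀ = pinv N22 := pinv_symm hN22T
  have hKer0 : N22 * (1 - pinv N22 * N22) = 0 := by
    rw [Matrix.mul_sub, Matrix.mul_one, ← Matrix.mul_assoc, p1, sub_self]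
  have hQ : N12 * (pinv N22 * N22) = N12 := by
    set K : Matrix (Fin n ⊕ Fin m) (Fin n ⊕ Fin m) ℝ := 1 - pinv N22 * N22 with hKdef
    have h1 : (Gᵀ * K)ᵀ * (-Φ22) * (Gᵀ * K) = 0 := by
      have e : (Gᵀ * K)ᵀ * (-Φ22) * (Gᵀ * K) = -(Kᵀ * (N22 * K)) := by
        rw [transpose_mul, transpose_transpose, hN22def]
        simp only [Matrix.mul_neg, Matrix.neg_mul, Matrix.mul_assoc]
      rw [e, hKer0, Matrix.mul_zero, neg_zero]
    have h2 : (-Φ22) * (Gᵀ * K) = 0 := psd_cancel hΦneg _ h1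
    have hYK : Φ22 * (Gᵀ * K) = 0 := by
      have : Φ22 * (Gᵀ * K) = -((-Φ22) * (Gᵀ * K)) := by
        simp [Matrix.neg_mul]
      rw [this, h2, neg_zero]
    have h12 : Φ12 * (Gᵀ * K) = 0 := hker _ hYK
    have hNK : N12 * K = 0 := by
      calc N12 * K = Φ12 * (Gᵀ * K) + Xp * (Φ22 * (Gᵀ * K)) := by
            rw [hN12def]
            simp only [Matrix.add_mul, Matrix.mul_assoc]
      _ = 0 := by rw [hYK, h12, Matrix.mul_zero, add_zero]
    rw [hKdef, Matrix.mul_sub, Matrix.mul_one, sub_eq_zero] at hNK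
    exact hNK.symm
  have hN21 : N21 = N12ᵀ := by
    rw [hN21def, hN12def, transpose_mul, transpose_transpose, transpose_add,
      transpose_mul, hΦ22]
    simp only [Matrix.mul_add, Matrix.mul_assoc]
  have hP : N22 * pinv N22 * N21 = N21 := by
    have h := congrArg Matrix.transpose hQ
    rw [transpose_mul, transpose_mul, hN22T, hPT] at h
    rw [hN21]
    exact h
  -- quadratic form expansion
  have hZNZ : Zᵀ * fromBlocks N11 N12 N21 N22 * Z
      = N11 + Fᵀ * N21 + (N12 + Fᵀ * N22) * F := by
    rw [hZdef, transpose_fromRows, fromCols_mul_fromBlocks, fromCols_mul_fromRows]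
    simp only [transpose_one, Matrix.one_mul, Matrix.mul_one]
  set C : Matrix (Fin n ⊕ Fin m) (Fin n) ℝ := F + pinv N22 * N21 with hCdef
  clear_value C
  have e1 : N22 * C = N22 * F + N21 := by
    rw [hCdef, Matrix.mul_add, ← Matrix.mul_assoc, hP]
  have e2 : Cᵀ = Fᵀ + N12 * pinv N22 := by
    rw [hCdef, transpose_add, transpose_mul, hPT, hN21, transpose_transpose]
  have hCNC : Cᵀ * N22 * C
      = Fᵀ * (N22 * F) + Fᵀ * N21 + N12 * F + N12 * (pinv N22 * N21) := by
    calc Cᵀ * N22 * C = (Fᵀ + N12 * pinv N22) * (N22 * F + N21) := by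
          rw [e2, Matrix.mul_assoc, e1]
    _ = Fᵀ * (N22 * F) + Fᵀ * N21 + (N12 * pinv N22) * (N22 * F)
        + (N12 * pinv N22) * N21 := by
          rw [Matrix.add_mul, Matrix.mul_add, Matrix.mul_add, ← add_assoc]
    _ = Fᵀ * (N22 * F) + Fᵀ * N21 + N12 * F + N12 * (pinv N22 * N21) := by
          have h3 : (N12 * pinv N22) * (N22 * F) = N12 * F := by
            calc (N12 * pinv N22) * (N22 * F) = (N12 * (pinv N22 * N22)) * F := by
                  simp only [Matrix.mul_assoc]
            _ = N12 * F := by rw [hQ]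
          rw [h3, Matrix.mul_assoc]
  have key : Zᵀ * fromBlocks N11 N12 N21 N22 * Z + Cᵀ * (-N22) * C
      = N11 - N12 * pinv N22 * N21 := by
    have hneg : Cᵀ * (-N22) * C = -(Cᵀ * N22 * C) := by
      simp only [Matrix.mul_neg, Matrix.neg_mul]
    rw [hZNZ, hneg, hCNC, Matrix.add_mul, Matrix.mul_assoc Fᵀ N22 F,
      Matrix.mul_assoc N12 (pinv N22) N21]
    abel
  constructor
  · exact part1
  · rw [hN]
    simp only [toBlocks_fromBlocks₁₁, toBlocks_fromBlocks₁₂, toBlocks_fromBlocks₂₁,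
      toBlocks_fromBlocks₂₂]
    rw [← key]
    have psd1 : (Zᵀ * fromBlocks N11 N12 N21 N22 * Z).PosSemidef := by
      rw [← hN]; exact part1
    have psd2 : (Cᵀ * (-N22) * C).PosSemidef := by
      have h := hnegN22.mul_mul_conjTranspose_same Cᵀ
      rwa [show (Cᵀᴴ : Matrix (Fin n ⊕ Fin m) (Fin n) ℝ) = C from
        (transpose_transpose C : Cᵀᵀ = C), ] at h
    exact psd1.add psd2
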